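/- Let R = Rᵀ ≻ 0 and F + Fᵀ ⪰ 0 with A = (R+F)^{-1}(R−F). Define V(x) = xᵀ R x. Then for all x ∈ ℝⁿ, V(Ax) − V(x) = −(Ax + x)ᵀ ((F+Fᵀ)/2) (Ax + x) ≤ 0. -/

import Mathlib

/-!
Put `y = A x`, so that `(R + F) y = (R - F) x`, i.e. `R (y - x) = -F (y + x)`. Since `R` is
symmetric, `V y - V x = (y + x)ᵀ R (y - x) = -(y + x)ᵀ F (y + x)`, and a quadratic form only sees
the symmetric part `(F + Fᵀ)/2` of its matrix, which is positive semidefinite. The same estimate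
shows `vᵀ (R + F) v > 0` for `v ≠ 0`, so `R + F` is invertible and `A` is well defined.
-/

open Matrix

section QuadraticForm

variable {ι α : Type*} [Fintype ι]

lemma dotProduct_add_transpose_mulVec_self [CommSemiring α] (F : Matrix ι ι α) (v : ι → α) :
    v ⬝ᵥ (F + Fᵀ) *ᵥ v = 2 * (v ⬝ᵥ F *ᵥ v) := by
  rw [add_mulVec, dotProduct_add, dotProduct_transpose_mulVec, two_mul]

lemma dotProduct_mulVec_sub_of_cayley [CommRing α] {R F : Matrix ι ι α} (hR : Rᵀ = R)
    {x y : ι → α} (h : (R + F) *ᵥ y = (R - F) *ᵥ x) :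
    y ⬝ᵥ R *ᵥ y - x ⬝ᵥ R *ᵥ x = -((y + x) ⬝ᵥ F *ᵥ (y + x)) := by
  have hdiff : R *ᵥ (y - x) = -(F *ᵥ (y + x)) := by
    rw [add_mulVec, sub_mulVec] at h
    rw [mulVec_sub, mulVec_add]
    linear_combination (norm := module) h
  have hsymm : x ⬝ᵥ R *ᵥ y = y ⬝ᵥ R *ᵥ x := by
    rw [← dotProduct_transpose_mulVec, hR]
  calc y ⬝ᵥ R *ᵥ y - x ⬝ᵥ R *ᵥ x = (y + x) ⬝ᵥ R *ᵥ (y - x) := by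
        rw [mulVec_sub, add_dotProduct, dotProduct_sub, dotProduct_sub, hsymm]
        ring
    _ = -((y + x) ⬝ᵥ F *ᵥ (y + x)) := by rw [hdiff, dotProduct_neg]

end QuadraticForm

section Real

variable {ι : Type*} [Fintype ι]

lemma dotProduct_mulVec_nonneg_of_posSemidef_add_transpose {F : Matrix ι ι ℝ}
    (hF : (F + Fᵀ).PosSemidef) (v : ι → ℝ) : 0 ≤ v ⬝ᵥ F *ᵥ v := by
  have h := hF.dotProduct_mulVec_nonneg v
  rw [star_trivial, dotProduct_add_transpose_mulVec_self] at h
  linarith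

lemma dotProduct_add_mulVec_pos {R F : Matrix ι ι ℝ} (hR : R.PosDef)
    (hF : (F + Fᵀ).PosSemidef) {v : ι → ℝ} (hv : v ≠ 0) : 0 < v ⬝ᵥ (R + F) *ᵥ v := by
  have hRv := hR.dotProduct_mulVec_pos hv
  rw [star_trivial] at hRv
  rw [add_mulVec, dotProduct_add]
  linarith [dotProduct_mulVec_nonneg_of_posSemidef_add_transpose hF v]

lemma isUnit_of_dotProduct_mulVec_pos [DecidableEq ι] {M : Matrix ι ι ℝ}
    (hM : ∀ v ≠ 0, 0 < v ⬝ᵥ M *ᵥ v) : IsUnit M := by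
  refine mulVec_injective_iff_isUnit.1 fun u w huw => ?_
  by_contra hne
  apply (hM (u - w) (sub_ne_zero.2 hne)).ne'
  rw [mulVec_sub, huw, sub_self, dotProduct_zero]

lemma isUnit_add_of_posDef_of_posSemidef_add_transpose [DecidableEq ι] {R F : Matrix ι ι ℝ}
    (hR : R.PosDef) (hF : (F + Fᵀ).PosSemidef) : IsUnit (R + F) :=
  isUnit_of_dotProduct_mulVec_pos fun _ hv => dotProduct_add_mulVec_pos hR hF hv

end Real

/-- Exact per-step energy decrease of the source-free FDTD system: with
`A = (R+F)⁻¹(R−F)` and `V(x) = xᵀ R x`,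
`V(Ax) − V(x) = −(Ax + x)ᵀ ((F+Fᵀ)/2) (Ax + x) ≤ 0`. -/
theorem stmt9 {n : ℕ}
    (R F : Matrix (Fin n) (Fin n) ℝ)
    (hR : R.PosDef) (hRsym : R = Rᵀ) (hF : (F + Fᵀ).PosSemidef)
    (A : Matrix (Fin n) (Fin n) ℝ) (hA : A = (R + F)⁻¹ * (R - F))
    (V : (Fin n → ℝ) → ℝ) (hV : ∀ x, V x = x ⬝ᵥ R.mulVec x) :
    ∀ x : Fin n → ℝ,
      V (A.mulVec x) - V x =
        -((A.mulVec x + x) ⬝ᵥ (((1 : ℝ) / 2) • (F + Fᵀ)).mulVec (A.mulVec x + x)) ∧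
      V (A.mulVec x) - V x ≤ 0 := by
  intro x
  have hdet : IsUnit (R + F).det :=
    (isUnit_iff_isUnit_det _).1 (isUnit_add_of_posDef_of_posSemidef_add_transpose hR hF)
  have hAx : (R + F) *ᵥ (A *ᵥ x) = (R - F) *ᵥ x := by
    rw [hA, mulVec_mulVec, mul_nonsing_inv_cancel_left _ _ hdet]
  have hsymm (v : Fin n → ℝ) : v ⬝ᵥ (((1 : ℝ) / 2) • (F + Fᵀ)) *ᵥ v = v ⬝ᵥ F *ᵥ v := by
    rw [smul_mulVec, dotProduct_smul, dotProduct_add_transpose_mulVec_self, smul_eq_mul]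
    ring
  rw [hV, hV, hsymm, dotProduct_mulVec_sub_of_cayley hRsym.symm hAx]
  exact ⟨rfl, neg_nonpos.2 (dotProduct_mulVec_nonneg_of_posSemidef_add_transpose hF _)⟩
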